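/- Let a > 0, μ > 1, h ∈ ℝ, and let H(q,p) = (p₁² + p₂²)/2 − a/(q₁² + μq₂²)^{1/2} be the Hamiltonian of the Anisotropic Kepler Problem. Let (q,p) : I → (ℝ² \ {0}) × ℝ² be a curve on an open interval I solving Hamilton's equations for H with H(q(t),p(t)) = h for all t ∈ I. Let s : I → J be the C¹ diffeomorphism onto an open interval J determined (up to an additive constant) by s'(t) = 1/(2a·(q₁(t)² + μq₂(t)²)^{1/2}), with inverse t(·) : J → I. Then the reparametrized curve (Q(s), P(s)) = (q(t(s)), p(t(s))) solves Hamilton's equations for the Hamiltonian H̃(Q,P) = (Q₁² + μQ₂²)·((P₁² + P₂²) − 2h)²/4 on J, and moreover H̃(Q(s),P(s)) = a² for all s ∈ J. -/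

import Mathlib

/-- A curve `(q, p)` on the set `I ⊆ ℝ` solves Hamilton's equations for the
Hamiltonian `K : ℝ² × ℝ² → ℝ` (with `ℝ²` modelled by `ℝ × ℝ`):
`qᵢ' = ∂K/∂pᵢ` and `pᵢ' = −∂K/∂qᵢ` on `I`, `i = 1, 2`. -/
def IsHamSol2 (K : (ℝ × ℝ) × (ℝ × ℝ) → ℝ) (q p : ℝ → ℝ × ℝ) (I : Set ℝ) : Prop :=
  ∀ t ∈ I,
    HasDerivAt (fun t' => (q t').1) (fderiv ℝ K (q t, p t) (((0, 0), (1, 0)))) t ∧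
    HasDerivAt (fun t' => (q t').2) (fderiv ℝ K (q t, p t) (((0, 0), (0, 1)))) t ∧
    HasDerivAt (fun t' => (p t').1) (-(fderiv ℝ K (q t, p t) (((1, 0), (0, 0))))) t ∧
    HasDerivAt (fun t' => (p t').2) (-(fderiv ℝ K (q t, p t) (((0, 1), (0, 0))))) t


/-! Poincaré's trick. Where `B(q) = q₁² + μq₂²` is positive, the geodesic Hamiltonian is
`H̃ = (√B · (H − h) + a)²`. On the energy level `H = h` this equals `a²`, and its differential
is `2a√B · dH`, so the Hamiltonian vector field of `H̃` is that of `H` scaled by `2a√B`, which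
is precisely `dt/ds` for the time change. -/

open Filter Topology

theorem fderiv_sq_mul_sub_add_of_eq {E : Type*} [NormedAddCommGroup E] [NormedSpace ℝ E]
    {K ρ : E → ℝ} {z : E} {h c : ℝ} (hK : DifferentiableAt ℝ K z)
    (hρ : DifferentiableAt ℝ ρ z) (hKz : K z = h) :
    fderiv ℝ (fun w => (ρ w * (K w - h) + c) ^ 2) z = (2 * c * ρ z) • fderiv ℝ K z := by
  have := (((hρ.hasFDerivAt.mul (hK.hasFDerivAt.sub_const h)).add_const c).pow 2).fderiv
  simpa [hKz, smul_smul] using this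

theorem IsHamSol2.comp_of_fderiv_eq_smul {K K' : (ℝ × ℝ) × (ℝ × ℝ) → ℝ} {q p : ℝ → ℝ × ℝ}
    {I J : Set ℝ} {σ c : ℝ → ℝ} (hsol : IsHamSol2 K q p I) (hσ : Set.MapsTo σ J I)
    (hσ' : ∀ s ∈ J, HasDerivAt σ (c s) s)
    (hK' : ∀ s ∈ J, fderiv ℝ K' (q (σ s), p (σ s)) = c s • fderiv ℝ K (q (σ s), p (σ s))) :
    IsHamSol2 K' (fun s => q (σ s)) (fun s => p (σ s)) J := by
  intro s hs
  obtain ⟨hq₁, hq₂, hp₁, hp₂⟩ := hsol (σ s) (hσ hs)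
  have reparam {f : ℝ → ℝ} {d : ℝ} (hf : HasDerivAt f d (σ s)) :
      HasDerivAt (fun s => f (σ s)) (c s * d) s :=
    (hf.comp s (hσ' s hs)).congr_deriv (mul_comm _ _)
  simp only [hK' s hs, smul_apply, smul_eq_mul, ← mul_neg]
  exact ⟨reparam hq₁, reparam hq₂, reparam hp₁, reparam hp₂⟩

theorem sq_add_mul_sq_pos {μ : ℝ} (hμ : 0 < μ) {x : ℝ × ℝ} (hx : x ≠ 0) :
    0 < x.1 ^ 2 + μ * x.2 ^ 2 := by
  rcases x with ⟨x₁, x₂⟩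
  have : x₁ ≠ 0 ∨ x₂ ≠ 0 := by
    contrapose! hx
    simp [hx.1, hx.2]
  rcases this with h₁ | h₂ <;> positivity

noncomputable section AnisotropicKepler

variable (a μ h : ℝ)

def akpHamiltonian : (ℝ × ℝ) × (ℝ × ℝ) → ℝ :=
  fun z => (z.2.1 ^ 2 + z.2.2 ^ 2) / 2 - a / Real.sqrt (z.1.1 ^ 2 + μ * z.1.2 ^ 2)

def akpGeodesicHamiltonian : (ℝ × ℝ) × (ℝ × ℝ) → ℝ :=
  fun z => (z.1.1 ^ 2 + μ * z.1.2 ^ 2) * ((z.2.1 ^ 2 + z.2.2 ^ 2) - 2 * h) ^ 2 / 4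

variable {a μ h}

theorem akpGeodesicHamiltonian_eq_sq {z : (ℝ × ℝ) × (ℝ × ℝ)}
    (hz : 0 < z.1.1 ^ 2 + μ * z.1.2 ^ 2) :
    akpGeodesicHamiltonian μ h z
      = (Real.sqrt (z.1.1 ^ 2 + μ * z.1.2 ^ 2) * (akpHamiltonian a μ z - h) + a) ^ 2 := by
  unfold akpGeodesicHamiltonian akpHamiltonian
  have hsq := Real.sq_sqrt hz.le
  set r := Real.sqrt (z.1.1 ^ 2 + μ * z.1.2 ^ 2)
  have hr : 0 < r := Real.sqrt_pos.2 hz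
  rw [← hsq]
  field_simp
  ring

theorem akpHamiltonian_differentiableAt {x y : ℝ × ℝ} (hx : 0 < x.1 ^ 2 + μ * x.2 ^ 2) :
    DifferentiableAt ℝ (akpHamiltonian a μ) (x, y) := by
  have hx' := hx.ne'
  have hr := (Real.sqrt_pos.2 hx).ne'
  unfold akpHamiltonian
  fun_prop (disch := assumption)

theorem fderiv_akpGeodesicHamiltonian {x y : ℝ × ℝ} (hx : 0 < x.1 ^ 2 + μ * x.2 ^ 2)
    (hE : akpHamiltonian a μ (x, y) = h) :
    fderiv ℝ (akpGeodesicHamiltonian μ h) (x, y)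
      = (2 * a * Real.sqrt (x.1 ^ 2 + μ * x.2 ^ 2)) • fderiv ℝ (akpHamiltonian a μ) (x, y) := by
  have hpos : ∀ᶠ z in 𝓝 (x, y), 0 < z.1.1 ^ 2 + μ * z.1.2 ^ 2 :=
    continuousAt_const.eventually_lt (by fun_prop) hx
  have hsq : akpGeodesicHamiltonian μ h =ᶠ[𝓝 (x, y)] fun z =>
      (Real.sqrt (z.1.1 ^ 2 + μ * z.1.2 ^ 2) * (akpHamiltonian a μ z - h) + a) ^ 2 := by
    filter_upwards [hpos] with z hz using akpGeodesicHamiltonian_eq_sq hz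
  have hx' := hx.ne'
  rw [hsq.fderiv_eq]
  exact fderiv_sq_mul_sub_add_of_eq (akpHamiltonian_differentiableAt hx)
    (by fun_prop (disch := assumption)) hE

theorem akpGeodesicHamiltonian_eq_of_akpHamiltonian_eq {z : (ℝ × ℝ) × (ℝ × ℝ)}
    (hz : 0 < z.1.1 ^ 2 + μ * z.1.2 ^ 2) (hE : akpHamiltonian a μ z = h) :
    akpGeodesicHamiltonian μ h z = a ^ 2 := by
  rw [akpGeodesicHamiltonian_eq_sq (a := a) hz, hE, sub_self, mul_zero, zero_add]

end AnisotropicKepler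

theorem akp_reduction_to_geodesic_hamiltonian_general
    (a μ h : ℝ) (ha : 0 < a) (hμ : 1 < μ)
    (H : (ℝ × ℝ) × (ℝ × ℝ) → ℝ)
    (hHdef : H = fun z => (z.2.1 ^ 2 + z.2.2 ^ 2) / 2
      - a / Real.sqrt (z.1.1 ^ 2 + μ * z.1.2 ^ 2))
    (I J : Set ℝ) (hJ : IsOpen J)
    (q p : ℝ → ℝ × ℝ) (hq0 : ∀ t ∈ I, q t ≠ 0)
    (hsol : IsHamSol2 H q p I)
    (hHh : ∀ t ∈ I, H (q t, p t) = h)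
    (τ σ : ℝ → ℝ)
    (hσmaps : Set.MapsTo σ J I)
    (hτσ : ∀ s ∈ J, τ (σ s) = s)
    (hτ' : ∀ t ∈ I, HasDerivAt τ
      (1 / (2 * a * Real.sqrt ((q t).1 ^ 2 + μ * (q t).2 ^ 2))) t)
    (hσdiff : ∀ s ∈ J, DifferentiableAt ℝ σ s) :
    IsHamSol2
      (fun z => (z.1.1 ^ 2 + μ * z.1.2 ^ 2)
        * ((z.2.1 ^ 2 + z.2.2 ^ 2) - 2 * h) ^ 2 / 4)
      (fun s => q (σ s)) (fun s => p (σ s)) J ∧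
    ∀ s ∈ J, ((q (σ s)).1 ^ 2 + μ * (q (σ s)).2 ^ 2)
        * (((p (σ s)).1 ^ 2 + (p (σ s)).2 ^ 2) - 2 * h) ^ 2 / 4 = a ^ 2 := by
  subst hHdef
  have hB (t : ℝ) (ht : t ∈ I) : 0 < (q t).1 ^ 2 + μ * (q t).2 ^ 2 :=
    sq_add_mul_sq_pos (by linarith) (hq0 t ht)
  have hσ' (s : ℝ) (hs : s ∈ J) :
      HasDerivAt σ (2 * a * Real.sqrt ((q (σ s)).1 ^ 2 + μ * (q (σ s)).2 ^ 2)) s := by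
    have hr := Real.sqrt_pos.2 (hB _ (hσmaps hs))
    simpa using (hτ' (σ s) (hσmaps hs)).of_local_left_inverse (hσdiff s hs).continuousAt
      (by positivity) (eventually_of_mem (hJ.mem_nhds hs) hτσ)
  exact ⟨hsol.comp_of_fderiv_eq_smul hσmaps hσ' fun s hs =>
      fderiv_akpGeodesicHamiltonian (hB _ (hσmaps hs)) (hHh _ (hσmaps hs)),
    fun s hs => akpGeodesicHamiltonian_eq_of_akpHamiltonian_eq (hB _ (hσmaps hs))
      (hHh _ (hσmaps hs))⟩

/-- **The Anisotropic Kepler Problem on the level `H = h` reduces, after a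
reparametrization of time, to the Hamiltonian
`H̃(Q,P) = (Q₁² + μQ₂²)((P₁² + P₂²) − 2h)²/4` on the level `H̃ = a²`.** -/
theorem akp_reduction_to_geodesic_hamiltonian
    (a μ h : ℝ) (ha : 0 < a) (hμ : 1 < μ)
    (H : (ℝ × ℝ) × (ℝ × ℝ) → ℝ)
    (hHdef : H = fun z => (z.2.1 ^ 2 + z.2.2 ^ 2) / 2
      - a / Real.sqrt (z.1.1 ^ 2 + μ * z.1.2 ^ 2))
    (I J : Set ℝ) (hI : IsOpen I) (hIconn : I.OrdConnected) (hIne : I.Nonempty)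
    (hJ : IsOpen J) (hJconn : J.OrdConnected)
    (q p : ℝ → ℝ × ℝ) (hq0 : ∀ t ∈ I, q t ≠ 0)
    (hsol : IsHamSol2 H q p I)
    (hHh : ∀ t ∈ I, H (q t, p t) = h)
    (τ σ : ℝ → ℝ)
    (hτmaps : Set.MapsTo τ I J) (hσmaps : Set.MapsTo σ J I)
    (hστ : ∀ t ∈ I, σ (τ t) = t) (hτσ : ∀ s ∈ J, τ (σ s) = s)
    (hτ' : ∀ t ∈ I, HasDerivAt τ
      (1 / (2 * a * Real.sqrt ((q t).1 ^ 2 + μ * (q t).2 ^ 2))) t)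
    (hσdiff : ∀ s ∈ J, DifferentiableAt ℝ σ s) :
    IsHamSol2
      (fun z => (z.1.1 ^ 2 + μ * z.1.2 ^ 2)
        * ((z.2.1 ^ 2 + z.2.2 ^ 2) - 2 * h) ^ 2 / 4)
      (fun s => q (σ s)) (fun s => p (σ s)) J ∧
    ∀ s ∈ J, ((q (σ s)).1 ^ 2 + μ * (q (σ s)).2 ^ 2)
        * (((p (σ s)).1 ^ 2 + (p (σ s)).2 ^ 2) - 2 * h) ^ 2 / 4 = a ^ 2 :=
  akp_reduction_to_geodesic_hamiltonian_general a μ h ha hμ H hHdef I J hJ q p hq0 hsol hHh τ σ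
    hσmaps hτσ hτ' hσdiff
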